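/- arXiv:1504.01099 — 2 statements merged into one kernel-verified Lean document; each statement's English description precedes it below -/
import Mathlib

section
/- Let n1, n2 be coprime positive integers, n = n1·n2, and let a, b be sequences over a field F of characteristic 2 with periods n1, n2 and DFTs A, B with respect to primitive roots of unity α (order n1) and β (order n2). Define s(t) = a(t)·b(t) and its DFT S with respect to γ = α·β. Then for every k, if A(k mod n1) = 0 or B(k mod n2) = 0, then S(k) = 0. -/
section aux

variable {F : Type*} [Field F]

private lemma aux_periodic (n : ℕ) (a : ℕ → F) (hpa : ∀ t, a (t + n) = a t) :
    ∀ t, a t = a (t % n) := by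
  intro t
  conv_lhs => rw [← Nat.mod_add_div t n]
  generalize t / n = q
  induction q with
  | zero => simp
  | succ q ih => rw [Nat.mul_succ, ← Nat.add_assoc, hpa, ih]

private lemma aux_pow (n : ℕ) (α : F) (hα1 : α ^ n = 1) :
    ∀ t m : ℕ, α ^ (t * m) = α ^ (t % n * (m % n)) := by
  have base : ∀ t m : ℕ, α ^ (t * m) = α ^ (t % n * m) := by
    intro t m
    conv_lhs => rw [← Nat.mod_add_div t n]
    rw [Nat.add_mul, pow_add, mul_assoc n, pow_mul α n, hα1, one_pow, mul_one]
  intro t m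
  rw [base, mul_comm, base, mul_comm]

end aux

/-- Corollary 1 of the paper (vanishing direction): for the product sequence
`s t = a t * b t` with DFT taken w.r.t. `γ = α * β`, if `A (k mod n1) = 0` or
`B (k mod n2) = 0` then `S k = 0`. -/
theorem stmt_13 {F : Type*} [Field F] [CharP F 2] (n1 n2 : ℕ)
    (h1 : 0 < n1) (h2 : 0 < n2) (hco : Nat.Coprime n1 n2)
    (α β : F) (hα : orderOf α = n1) (hβ : orderOf β = n2)
    (a b : ℕ → F) (hpa : ∀ t, a (t + n1) = a t) (hpb : ∀ t, b (t + n2) = b t)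
    (A B S : ℕ → F)
    (hA : ∀ k, A k = ∑ j ∈ Finset.range n1, a j * α ^ (j * k))
    (hB : ∀ k, B k = ∑ v ∈ Finset.range n2, b v * β ^ (v * k))
    (hS : ∀ k, S k = ∑ t ∈ Finset.range (n1 * n2),
      (a t * b t) * (α * β) ^ (t * k)) :
    ∀ k, (A (k % n1) = 0 ∨ B (k % n2) = 0) → S k = 0 := by
  have hα1 : α ^ n1 = 1 := hα ▸ pow_orderOf_eq_one α
  have hβ1 : β ^ n2 = 1 := hβ ▸ pow_orderOf_eq_one β
  have hn : 0 < n1 * n2 := Nat.mul_pos h1 h2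
  have key : ∀ k, S k = A (k % n1) * B (k % n2) := by
    intro k
    rw [hS, hA, hB, Finset.sum_mul_sum, ← Finset.sum_product']
    refine Finset.sum_nbij' (fun t => (t % n1, t % n2))
      (fun p => ((Nat.chineseRemainder hco p.1 p.2 : ℕ) % (n1 * n2)))
      ?_ ?_ ?_ ?_ ?_
    · intro t ht
      simp only [Finset.mem_product, Finset.mem_range]
      exact ⟨Nat.mod_lt _ h1, Nat.mod_lt _ h2⟩
    · intro p hp
      exact Finset.mem_range.mpr (Nat.mod_lt _ hn)
    · intro t ht
      have ht' : t < n1 * n2 := Finset.mem_range.mp ht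
      have hc := (Nat.chineseRemainder hco (t % n1) (t % n2)).2
      have h1' : (Nat.chineseRemainder hco (t % n1) (t % n2) : ℕ) ≡ t [MOD n1] :=
        hc.1.trans (Nat.mod_modEq t n1)
      have h2' : (Nat.chineseRemainder hco (t % n1) (t % n2) : ℕ) ≡ t [MOD n2] :=
        hc.2.trans (Nat.mod_modEq t n2)
      have hmod : (Nat.chineseRemainder hco (t % n1) (t % n2) : ℕ) ≡ t [MOD n1 * n2] :=
        (Nat.modEq_and_modEq_iff_modEq_mul hco).mp ⟨h1', h2'⟩
      simpa [Nat.ModEq, Nat.mod_eq_of_lt ht'] using hmod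
    · intro p hp
      simp only [Finset.mem_product, Finset.mem_range] at hp
      have hc := (Nat.chineseRemainder hco p.1 p.2).2
      have e1 : (Nat.chineseRemainder hco p.1 p.2 : ℕ) % n1 = p.1 := by
        simpa [Nat.ModEq, Nat.mod_eq_of_lt hp.1] using hc.1
      have e2 : (Nat.chineseRemainder hco p.1 p.2 : ℕ) % n2 = p.2 := by
        simpa [Nat.ModEq, Nat.mod_eq_of_lt hp.2] using hc.2
      simp [Nat.mod_mod_of_dvd _ (dvd_mul_right n1 n2),
        Nat.mod_mod_of_dvd _ (dvd_mul_left n2 n1), e1, e2]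
    · intro t ht
      have ea : a t = a (t % n1) := aux_periodic n1 a hpa t
      have eb : b t = b (t % n2) := aux_periodic n2 b hpb t
      have eα : α ^ (t * k) = α ^ (t % n1 * (k % n1)) := aux_pow n1 α hα1 t k
      have eβ : β ^ (t * k) = β ^ (t % n2 * (k % n2)) := aux_pow n2 β hβ1 t k
      rw [mul_pow, ea, eb, eα, eβ]
      ring
  intro k hk
  rcases hk with h | h <;> rw [key k, h] <;> ring
end

section
/- Let s be a periodic sequence over GF(2^m) of period n with n | 2^m − 1, and let S be its DFT with respect to a primitive n-th root of unity. The linear complexity (length of the shortest LFSR over GF(2^m) generating s) equals the number of nonzero components of S. -/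
/-!
By DFT inversion (`n` is invertible in `F` since `F` contains a primitive `n`-th root of
unity), `s t = ∑ₖ (S k / n) (α⁻ᵏ)ᵗ`: a combination of geometric sequences with pairwise
distinct ratios `α⁻ᵏ` whose nonzero coefficients are exactly the nonzero `S k`. Since such
geometric sequences are linearly independent (Artin), a linear recurrence is satisfied by this
combination iff every ratio occurring in it is a root of its characteristic polynomial. So the
shortest recurrence has characteristic polynomial `∏ (X - α⁻ᵏ)` over the support of `S`.
-/

open Finset Polynomial

section

variable {K : Type*} [Field K]

theorem eq_zero_of_forall_sum_mul_pow_eq_zero {ι : Type*} [Fintype ι] {x : ι → K}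
    (hx : Function.Injective x) {d : ι → K} (h : ∀ t : ℕ, ∑ i, d i * x i ^ t = 0)
    (i : ι) :
    d i = 0 := by
  have hli := (linearIndependent_monoidHom (Multiplicative ℕ) K).comp _
    ((powersHom K).injective.comp hx)
  refine Fintype.linearIndependent_iff.mp hli d (funext fun t => ?_) i
  simpa [Finset.sum_apply] using h t.toAdd

namespace LinearRecurrence

theorem eval_charPoly (E : LinearRecurrence K) (q : K) :
    E.charPoly.eval q = q ^ E.order - ∑ i, E.coeffs i * q ^ (i : ℕ) := by
  simp [charPoly, eval_finsetSum, eval_monomial]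

def ofMonic (p : K[X]) : LinearRecurrence K :=
  ⟨p.natDegree, fun i => -p.coeff i⟩

theorem charPoly_ofMonic {p : K[X]} (hp : p.Monic) : (ofMonic p).charPoly = p := by
  conv_rhs => rw [hp.as_sum]
  simp only [charPoly, ofMonic, ← C_mul_X_pow_eq_monomial, C_1, one_mul, C_neg, neg_mul,
    sum_neg_distrib, sub_neg_eq_add]
  exact congrArg (X ^ p.natDegree + ·)
    (Fin.sum_univ_eq_sum_range (fun i => C (p.coeff i) * X ^ i) _)

variable {ι : Type*} [Fintype ι] {x : ι → K}

theorem isSolution_sum_geom_iff (E : LinearRecurrence K) {b : ι → K}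
    (hx : Function.Injective x) (hb : ∀ i, b i ≠ 0) :
    E.IsSolution (fun t => ∑ i, b i * x i ^ t) ↔ ∀ i, E.charPoly.IsRoot (x i) := by
  constructor
  · intro hE i
    have residual : ∀ t : ℕ, ∑ i, b i * E.charPoly.eval (x i) * x i ^ t = 0 := by
      intro t
      rw [← sub_eq_zero.mpr (hE t)]
      simp only [E.eval_charPoly, mul_sub, sub_mul, sum_sub_distrib, mul_sum, sum_mul]
      rw [sum_comm (s := univ (α := Fin E.order))]
      congr 1 <;> refine sum_congr rfl fun _ _ => ?_
      · ring
      · refine sum_congr rfl fun _ _ => ?_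
        ring
    exact (mul_eq_zero.mp (eq_zero_of_forall_sum_mul_pow_eq_zero hx residual i)).resolve_left
      (hb i)
  · intro hroot
    have hsum : (fun t => ∑ i, b i * x i ^ t) = ∑ i, b i • fun t => x i ^ t := by
      ext t
      simp [Finset.sum_apply]
    rw [E.is_sol_iff_mem_solSpace, hsum]
    refine Submodule.sum_mem _ fun i _ => ?_
    exact Submodule.smul_mem _ (b i) <| (E.is_sol_iff_mem_solSpace _).mp <|
      (E.geom_sol_iff_root_charPoly _).mpr (hroot i)

theorem card_le_order_of_isRoot (E : LinearRecurrence K) (hx : Function.Injective x)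
    (hroot : ∀ i, E.charPoly.IsRoot (x i)) : Fintype.card ι ≤ E.order := by
  classical
  have hroots : (univ.image x).val ⊆ E.charPoly.roots := fun y hy => by
    obtain ⟨i, -, rfl⟩ := mem_image.mp hy
    exact (mem_roots E.charPoly_monic.ne_zero).mpr (hroot i)
  calc Fintype.card ι = (univ.image x).card := (card_image_of_injective _ hx).symm
    _ ≤ E.charPoly.natDegree := card_le_degree_of_subset_roots hroots
    _ = E.order := natDegree_eq_of_degree_eq_some E.charPoly_degree_eq_order

theorem exists_order_eq_card_forall_isRoot (x : ι → K) :
    ∃ E : LinearRecurrence K, E.order = Fintype.card ι ∧ ∀ i, E.charPoly.IsRoot (x i) := by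
  have hp : (∏ i, (X - C (x i))).Monic := monic_prod_of_monic _ _ fun i _ => monic_X_sub_C (x i)
  refine ⟨ofMonic (∏ i, (X - C (x i))), natDegree_finsetProd_X_sub_C_eq_card _ _, fun i => ?_⟩
  rw [charPoly_ofMonic hp, IsRoot, eval_prod]
  exact prod_eq_zero (mem_univ i) (by simp)

end LinearRecurrence

noncomputable def linearComplexity (u : ℕ → K) : ℕ :=
  sInf {L | ∃ c : Fin L → K, (LinearRecurrence.mk L c).IsSolution u}

theorem linearComplexity_sum_geom {ι : Type*} [Fintype ι] {b x : ι → K}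
    (hx : Function.Injective x) (hb : ∀ i, b i ≠ 0) :
    linearComplexity (fun t => ∑ i, b i * x i ^ t) = Fintype.card ι := by
  refine IsLeast.csInf_eq ⟨?_, ?_⟩
  · obtain ⟨E, hord, hroot⟩ := LinearRecurrence.exists_order_eq_card_forall_isRoot x
    rw [← hord]
    exact ⟨E.coeffs, (E.isSolution_sum_geom_iff hx hb).mpr hroot⟩
  · rintro L ⟨c, hc⟩
    exact LinearRecurrence.card_le_order_of_isRoot _ hx <|
      (LinearRecurrence.isSolution_sum_geom_iff _ hx hb).mp hc

def dft (ζ : K) (n : ℕ) (s : ℕ → K) (k : ℕ) : K :=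
  ∑ t ∈ range n, s t * ζ ^ (t * k)

namespace IsPrimitiveRoot

variable {ζ : K} {n : ℕ}

theorem sum_pow_div_pow (hζ : IsPrimitiveRoot ζ n) {u : ℕ} (hu : u < n) (t : ℕ) :
    ∑ k ∈ range n, (ζ ^ u / ζ ^ t) ^ k = if u = t % n then (n : K) else 0 := by
  have hζ0 : ζ ≠ 0 := hζ.ne_zero (by omega)
  rw [← pow_mod_orderOf ζ t, ← hζ.eq_orderOf]
  split_ifs with h
  · rw [← h, div_self (pow_ne_zero _ hζ0)]
    simp
  · have hne : ζ ^ u / ζ ^ (t % n) ≠ 1 := fun h1 =>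
      h (hζ.pow_inj hu (Nat.mod_lt _ (by omega)) ((div_eq_one_iff_eq (pow_ne_zero _ hζ0)).mp h1))
    have hpow : (ζ ^ u / ζ ^ (t % n)) ^ n = 1 := by
      rw [div_pow, ← pow_mul, ← pow_mul, mul_comm u, mul_comm (t % n), pow_mul, pow_mul,
        hζ.pow_eq_one, one_pow, one_pow, div_one]
    rw [geom_sum_eq hne, hpow, sub_self, zero_div]

variable [NeZero n]

theorem sum_dft_mul_inv_pow (hζ : IsPrimitiveRoot ζ n) {s : ℕ → K}
    (hs : Function.Periodic s n) (t : ℕ) :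
    ∑ k ∈ range n, dft ζ n s k * (ζ ^ k)⁻¹ ^ t = n * s t := by
  calc ∑ k ∈ range n, dft ζ n s k * (ζ ^ k)⁻¹ ^ t
      = ∑ k ∈ range n, ∑ u ∈ range n, s u * (ζ ^ u / ζ ^ t) ^ k := by
        refine sum_congr rfl fun k _ => ?_
        rw [dft, sum_mul]
        refine sum_congr rfl fun u _ => ?_
        rw [div_pow, ← pow_mul, ← pow_mul, inv_pow, ← pow_mul, mul_comm k t, div_eq_mul_inv,
          mul_assoc]
    _ = ∑ u ∈ range n, s u * ∑ k ∈ range n, (ζ ^ u / ζ ^ t) ^ k := by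
        rw [sum_comm]
        simp only [mul_sum]
    _ = ∑ u ∈ range n, if u = t % n then s u * n else 0 := sum_congr rfl fun u hu => by
        rw [hζ.sum_pow_div_pow (mem_range.mp hu), mul_ite, mul_zero]
    _ = n * s t := by
        rw [sum_ite_eq', if_pos (mem_range.mpr (Nat.mod_lt _ (NeZero.pos n))), hs.map_mod_nat,
          mul_comm]

theorem eq_sum_dft_mul_inv_pow (hζ : IsPrimitiveRoot ζ n) {s : ℕ → K}
    (hs : Function.Periodic s n) (t : ℕ) :
    s t = ∑ k ∈ range n, ((n : K)⁻¹ * dft ζ n s k) * (ζ ^ k)⁻¹ ^ t := by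
  have := hζ.neZero'
  simp only [mul_assoc, ← mul_sum, hζ.sum_dft_mul_inv_pow hs,
    inv_mul_cancel_left₀ (NeZero.ne _)]

end IsPrimitiveRoot

end

theorem stmt_18_general {F : Type*} [Field F] [DecidableEq F]
    (n : ℕ) (hn0 : 0 < n)
    (α : F) (hα : orderOf α = n)
    (s : ℕ → F) (hper : ∀ t, s (t + n) = s t)
    (S : ℕ → F) (hS : ∀ k, S k = ∑ t ∈ Finset.range n, s t * α ^ (t * k)) :
    sInf {L : ℕ | ∃ c : Fin L → F,
        ∀ t, s (t + L) = ∑ i : Fin L, c i * s (t + (i : ℕ))} =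
      ((Finset.range n).filter fun k => S k ≠ 0).card := by
  have : NeZero n := ⟨hn0.ne'⟩
  have hprim : IsPrimitiveRoot α n := hα ▸ IsPrimitiveRoot.orderOf α
  obtain rfl : S = dft α n s := funext hS
  set E := (range n).filter fun k => dft α n s k ≠ 0
  have hrep :
      s = fun t => ∑ k : E, ((n : F)⁻¹ * dft α n s k) * (α ^ (k : ℕ))⁻¹ ^ t := by
    funext t
    rw [sum_coe_sort E fun k => ((n : F)⁻¹ * dft α n s k) * (α ^ k)⁻¹ ^ t,
      sum_filter_of_ne fun k _ h => right_ne_zero_of_mul (left_ne_zero_of_mul h)]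
    exact hprim.eq_sum_dft_mul_inv_pow hper t
  have hinj : Function.Injective fun k : E => (α ^ (k : ℕ))⁻¹ := fun k l hkl =>
    Subtype.ext <| hprim.pow_inj (mem_range.mp (mem_filter.mp k.2).1)
      (mem_range.mp (mem_filter.mp l.2).1) (inv_injective hkl)
  have hcoeff : ∀ k : E, (n : F)⁻¹ * dft α n s k ≠ 0 := fun k =>
    mul_ne_zero (inv_ne_zero hprim.neZero'.out) (mem_filter.mp k.2).2
  rw [hrep]
  exact (linearComplexity_sum_geom hinj hcoeff).trans (Fintype.card_coe E)

/-- Blahut's theorem: for a sequence `s` of period `n` over `GF(2^m)` with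
`n ∣ 2^m - 1`, the linear complexity (the least `L` such that some LFSR of
length `L` over `F` generates `s`) equals the number of nonzero DFT
components. -/
theorem stmt_18 {F : Type*} [Field F] [Fintype F] [DecidableEq F]
    (m n : ℕ) (hcard : Fintype.card F = 2 ^ m) (hn0 : 0 < n)
    (hn : n ∣ 2 ^ m - 1)
    (α : F) (hα : orderOf α = n)
    (s : ℕ → F) (hper : ∀ t, s (t + n) = s t)
    (S : ℕ → F) (hS : ∀ k, S k = ∑ t ∈ Finset.range n, s t * α ^ (t * k)) :
    sInf {L : ℕ | ∃ c : Fin L → F,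
        ∀ t, s (t + L) = ∑ i : Fin L, c i * s (t + (i : ℕ))} =
      ((Finset.range n).filter fun k => S k ≠ 0).card :=
  stmt_18_general n hn0 α hα s hper S hS
end
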